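/- arXiv:0909.1359 — 8 statements merged into one kernel-verified Lean document; each statement's English description precedes it below -/
import Mathlib

section
/- In the polynomial ring F_q[X,Y], the identity X^{q-1} + ∑_{a ∈ F_q} (aX + Y)^{q-1} = 0 holds. -/
open MvPolynomial Finset

lemma sum_pow_card_sub_one' (F : Type*) [Field F] [Fintype F] :
    ∑ a : F, a ^ (Fintype.card F - 1) = -1 := by
  classical
  rw [← Finset.sum_subset (Finset.subset_univ ({0}ᶜ : Finset F))]
  · calc ∑ a ∈ ({0}ᶜ : Finset F), a ^ (Fintype.card F - 1)
        = ∑ a ∈ ({0}ᶜ : Finset F), 1 := by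
          refine Finset.sum_congr rfl fun a ha => ?_
          exact FiniteField.pow_card_sub_one_eq_one a (by simpa using ha)
      _ = ((Fintype.card F - 1 : ℕ) : F) := by
          simp [Finset.card_compl]
      _ = -1 := by
          have h1 : 1 ≤ Fintype.card F := Fintype.card_pos
          rw [Nat.cast_sub h1, FiniteField.cast_card_eq_zero, Nat.cast_one, zero_sub]
  · intro x _ hx
    have hx0 : x = 0 := by simpa using hx
    have h1 : 1 < Fintype.card F := Fintype.one_lt_card
    rw [hx0, zero_pow (by omega)]

/-- In `F_q[X, Y]` one has `X^{q-1} + ∑_{a ∈ F_q} (aX + Y)^{q-1} = 0`. -/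
theorem dickson_sum_identity (F : Type*) [Field F] [Fintype F] :
    (X 0 : MvPolynomial (Fin 2) F) ^ (Fintype.card F - 1) +
      ∑ a : F, (C a * X 0 + X 1) ^ (Fintype.card F - 1) = 0 := by
  classical
  set n := Fintype.card F - 1 with hn
  have hn1 : 1 ≤ n := by
    have := Fintype.one_lt_card (α := F)
    omega
  have key : ∑ a : F, (C a * X 0 + X 1 : MvPolynomial (Fin 2) F) ^ n
      = - (X 0) ^ n := by
    have expand : ∀ a : F, (C a * X 0 + X 1 : MvPolynomial (Fin 2) F) ^ n
        = ∑ k ∈ range (n + 1), C (a ^ k) * ((X 0) ^ k * (X 1) ^ (n - k) * (n.choose k : MvPolynomial (Fin 2) F)) := by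
      intro a
      rw [add_pow]
      refine Finset.sum_congr rfl fun k _ => ?_
      ring_nf
      rw [← C_pow]
      ring
    rw [Finset.sum_congr rfl fun a _ => expand a, Finset.sum_comm]
    have step : ∀ k ∈ range (n + 1),
        (∑ a : F, C (a ^ k) * ((X 0) ^ k * (X 1) ^ (n - k) * (n.choose k : MvPolynomial (Fin 2) F)))
        = if k = n then - (X 0) ^ n else 0 := by
      intro k hk
      rw [← Finset.sum_mul, ← map_sum]
      by_cases hkn : k = n
      · subst hkn
        rw [sum_pow_card_sub_one' F]
        simp
      · have hklt : k < n := by simp at hk; omega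
        rw [if_neg hkn]
        rcases Nat.eq_zero_or_pos k with hk0 | hkpos
        · subst hk0
          simp [FiniteField.cast_card_eq_zero]
        · rw [FiniteField.sum_pow_lt_card_sub_one F k (by omega)]
          simp
    rw [Finset.sum_congr rfl step]
    simp
  rw [key]; ring
end

section
/- For q a prime power, the binomial coefficient C(q-1-k, p-k) is divisible by p whenever q > p and 2 ≤ k ≤ p - 1. Conversely, if q = p, then C(q-1-k, r-k) is not divisible by p for all r with k ≤ r ≤ q - 1. -/
/-! Write `N = q - 1 - k`. When `q > p`, the last base-`p` digit of `N` is `p - 1 - k`, smaller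
than the digit `p - k` of `p - k`, so Lucas' theorem makes `C(N, p - k)` vanish mod `p`. When
`q = p`, `N < p`, so no factor `p` occurs in `N!` and hence in any `C(N, j)`. -/

namespace Nat

lemma sub_one_sub_mod_of_dvd {p a k : ℕ} (hk : k < p) (hpa : p ∣ a) (ha : 0 < a) :
    (a - 1 - k) % p = p - 1 - k := by
  obtain ⟨c, rfl⟩ := hpa
  obtain _ | c := c
  · simp at ha
  have hsplit : p * (c + 1) - 1 - k = p * c + (p - 1 - k) := by
    rw [Nat.mul_succ]
    omega
  rw [hsplit, Nat.mul_add_mod, Nat.mod_eq_of_lt (by omega)]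

lemma Prime.dvd_choose_of_mod_lt {p n k : ℕ} (hp : p.Prime) (h : n % p < k % p) :
    p ∣ n.choose k := by
  have := Fact.mk hp
  have hlucas := Choose.choose_modEq_choose_mod_mul_choose_div_nat (n := n) (k := k) (p := p)
  rw [choose_eq_zero_of_lt h, zero_mul] at hlucas
  exact Nat.modEq_zero_iff_dvd.mp hlucas

end Nat

theorem choose_div_by_p_iff_general (p n : ℕ) (hp : p.Prime)
    (k : ℕ) (hk2 : 2 ≤ k) (hkp : k ≤ p - 1) :
    (p ^ n > p → p ∣ (p ^ n - 1 - k).choose (p - k)) ∧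
    (p ^ n = p → ∀ r : ℕ, k ≤ r → r ≤ p ^ n - 1 → ¬ p ∣ (p ^ n - 1 - k).choose (r - k)) := by
  have hkp' : k < p := by omega
  constructor
  · intro hq
    have hn : n ≠ 0 := by rintro rfl; simp at hq; omega
    apply hp.dvd_choose_of_mod_lt
    rw [Nat.sub_one_sub_mod_of_dvd hkp' (dvd_pow_self p hn) (pow_pos hp.pos n),
      Nat.mod_eq_of_lt (by omega : p - k < p)]
    omega
  · intro hq r hkr hrq
    rw [hq] at hrq ⊢
    exact hp.coprime_iff_not_dvd.mp (hp.coprime_choose_of_lt (by omega) (by omega))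

/-- Let `q = p ^ n` with `p` an odd prime and `2 ≤ k ≤ p - 1`.  If `q > p` then
`p` divides the binomial coefficient `C(q - 1 - k, p - k)`; conversely, if `q = p`
then `p` does not divide `C(q - 1 - k, r - k)` for all `k ≤ r ≤ q - 1`. -/
theorem choose_div_by_p_iff (p n : ℕ) (hp : p.Prime) (hodd : Odd p) (hn : 0 < n)
    (k : ℕ) (hk2 : 2 ≤ k) (hkp : k ≤ p - 1) :
    (p ^ n > p → p ∣ (p ^ n - 1 - k).choose (p - k)) ∧
    (p ^ n = p → ∀ r : ℕ, k ≤ r → r ≤ p ^ n - 1 → ¬ p ∣ (p ^ n - 1 - k).choose (r - k)) :=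
  choose_div_by_p_iff_general p n hp k hk2 hkp
end

section
/- The F_q-linear map D on F_q[X,Y] defined by D(f) = X^q · ∂f/∂X + Y^q · ∂f/∂Y is equivariant for the action of GL_2(F_q), i.e., D(g·f) = g·D(f) for all g ∈ GL_2(F_q) and all f ∈ F_q[X,Y]. -/
open MvPolynomial

/-- The Serre operator `D f = X^q ∂f/∂X + Y^q ∂f/∂Y` on `F_q[X, Y]`. -/
noncomputable def serreD (F : Type*) [Field F] [Fintype F] :
    MvPolynomial (Fin 2) F → MvPolynomial (Fin 2) F :=
  fun f => X 0 ^ Fintype.card F * pderiv 0 f + X 1 ^ Fintype.card F * pderiv 1 f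

/-- The action of a matrix `g` on `F[X, Y]`, determined by
`g · X = aX + cY`, `g · Y = bX + dY` for `g = [[a, b], [c, d]]`. -/
noncomputable def matAct {F : Type*} [Field F] (g : Matrix (Fin 2) (Fin 2) F) :
    MvPolynomial (Fin 2) F →ₐ[F] MvPolynomial (Fin 2) F :=
  aeval (fun i => ∑ j, C (g j i) * X j)

/-!
`D` is the `F`-derivation of `F[X, Y]` sending each variable `Xᵢ` to `Xᵢ ^ q`. For an algebra
endomorphism `g`, both `D ∘ g` and `g ∘ D` satisfy the Leibniz rule along `g`, so they agree as soon
as they agree on the variables. There it comes down to `D ℓ = ℓ ^ q` for every linear form `ℓ`,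
which holds because `x ↦ x ^ q` is additive in characteristic `p` and fixes the scalars.
-/

namespace MvPolynomial

theorem derivation_algHom_comm {R σ A : Type*} [CommRing R] [CommRing A] [Algebra R A]
    (D₁ : Derivation R A A) (D₂ : Derivation R (MvPolynomial σ R) (MvPolynomial σ R))
    (φ : MvPolynomial σ R →ₐ[R] A) (h : ∀ i, D₁ (φ (X i)) = φ (D₂ (X i)))
    (f : MvPolynomial σ R) : D₁ (φ f) = φ (D₂ f) := by
  induction f using MvPolynomial.induction_on with
  | C a => simp [derivation_C]
  | add p q hp hq => simp only [map_add, hp, hq]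
  | mul_X p i hp => simp only [map_mul, map_add, Derivation.leibniz, smul_eq_mul, hp, h]

variable (σ F : Type*) [Field F] [Fintype F]

noncomputable def frobeniusDerivation : Derivation F (MvPolynomial σ F) (MvPolynomial σ F) :=
  mkDerivation F fun i => X i ^ Fintype.card F

variable {σ F}

theorem frobeniusDerivation_X (i : σ) : frobeniusDerivation σ F (X i) = X i ^ Fintype.card F :=
  mkDerivation_X F _ i

theorem frobeniusDerivation_linear [Fintype σ] (c : σ → F) :
    frobeniusDerivation σ F (∑ j, C (c j) * X j) = (∑ j, C (c j) * X j) ^ Fintype.card F := by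
  rw [← FiniteField.frobeniusAlgHom_apply F, map_sum, map_sum]
  refine Finset.sum_congr rfl fun j _ => ?_
  simp [Derivation.leibniz, derivation_C, frobeniusDerivation_X, mul_pow, ← C_pow,
    FiniteField.pow_card]

theorem frobeniusDerivation_aeval_linear [Fintype σ] (g : Matrix σ σ F) (f : MvPolynomial σ F) :
    frobeniusDerivation σ F (aeval (fun i => ∑ j, C (g j i) * X j) f) =
      aeval (fun i => ∑ j, C (g j i) * X j) (frobeniusDerivation σ F f) :=
  derivation_algHom_comm _ _ _ (fun i => by
    rw [aeval_X, frobeniusDerivation_linear, frobeniusDerivation_X, map_pow, aeval_X]) f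

end MvPolynomial

theorem serreD_eq_frobeniusDerivation (F : Type*) [Field F] [Fintype F]
    (f : MvPolynomial (Fin 2) F) : serreD F f = frobeniusDerivation (Fin 2) F f := by
  change ((X 0 : MvPolynomial (Fin 2) F) ^ Fintype.card F • pderiv 0 +
      (X 1 : MvPolynomial (Fin 2) F) ^ Fintype.card F • pderiv 1 :
    Derivation F (MvPolynomial (Fin 2) F) (MvPolynomial (Fin 2) F)) f = _
  congr 1
  refine derivation_ext fun i => ?_
  fin_cases i <;> simp [pderiv_X, frobeniusDerivation_X]

/-- The Serre operator `D` is `GL₂(F_q)`-equivariant: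
`D (g · f) = g · (D f)` for all `g ∈ GL₂(F_q)` and all `f ∈ F_q[X, Y]`. -/
theorem serreD_equivariant (F : Type*) [Field F] [Fintype F]
    (g : GL (Fin 2) F) (f : MvPolynomial (Fin 2) F) :
    serreD F (matAct (g : Matrix (Fin 2) (Fin 2) F) f) =
      matAct (g : Matrix (Fin 2) (Fin 2) F) (serreD F f) := by
  simp only [serreD_eq_frobeniusDerivation]
  exact frobeniusDerivation_aeval_linear _ f
end

section
/- The kernel of the map D : F_q[X,Y] → F_q[X,Y], D(f) = X^q ∂f/∂X + Y^q ∂f/∂Y, is exactly the subring F_q[X^p, Y^p, θ_q], where θ_q = X^q Y − X Y^q and p is the characteristic of F_q. -/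
/-!
Write `q = |F|` and `θ = X^q Y - X Y^q`. Since `q = 0` in `F`, `∂θ/∂X = -Y^q` and `∂θ/∂Y = X^q`,
so the derivation `D` kills `X^p`, `Y^p` and `θ`. Conversely, let `D f = 0`. As `X^q` and `Y^q` are
coprime, `∂f/∂Y = X^q h` and `∂f/∂X = -Y^q h`, and symmetry of mixed partials gives `D h = 0`, where
`h` has smaller degree. By induction `h = ∑_{k<p} c_k θ^k` with `c_k ∈ F[X^p, Y^p]`. Since
`∂_Y^p = 0` in characteristic `p`, applying `∂_Y^{p-1}` to `X^q h = ∂f/∂Y` gives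
`(p-1)! X^{q(p-1)} c_{p-1} = 0`, so `c_{p-1} = 0`. Then `g = ∑_{k<p-1} c_k θ^{k+1}/(k+1)` has the
same partial derivatives as `f`, hence `f - g ∈ F[X^p, Y^p]`.
-/

open MvPolynomial

open Finset

theorem Derivation.iterate_mul_pow {R A : Type*} [CommSemiring R] [CommSemiring A] [Algebra R A]
    (D : Derivation R A A) {c t : A} (hc : D c = 0) (ht : D (D t) = 0) (k j : ℕ) :
    D^[j] (c * t ^ k) = k.descFactorial j • (c * D t ^ j * t ^ (k - j)) := by
  induction j with
  | zero => simp
  | succ j ih =>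
    have hpow : D (D t ^ j) = 0 := by simp [Derivation.leibniz_pow, ht]
    rw [Function.iterate_succ_apply', ih, D.map_smul_of_tower, D.leibniz, D.leibniz, hc, hpow,
      D.leibniz_pow, Nat.descFactorial_succ, Nat.sub_sub]
    simp only [smul_eq_mul, nsmul_eq_mul, Nat.cast_mul]
    ring

namespace MvPolynomial

variable {σ R : Type*}

theorem coeff_iterate_pderiv [CommSemiring R] (i : σ) (k : ℕ) (f : MvPolynomial σ R)
    (m : σ →₀ ℕ) :
    coeff m ((pderiv i)^[k] f) = coeff (m + Finsupp.single i k) f * (m i + k).descFactorial k := by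
  classical
  induction k generalizing f with
  | zero => simp
  | succ k ih =>
    rw [Function.iterate_succ_apply, ih, coeff_pderiv, add_assoc, ← Finsupp.single_add,
      ← add_assoc (m i), Nat.succ_descFactorial_succ]
    simp only [Finsupp.add_apply, Finsupp.single_eq_same, Nat.cast_mul, Nat.cast_add, Nat.cast_one]
    ring

theorem iterate_pderiv_eq_zero_of_charP [CommSemiring R] (p : ℕ) [CharP R p] (hp : p ≠ 0)
    (i : σ) (f : MvPolynomial σ R) : (pderiv i)^[p] f = 0 := by
  ext m
  rw [coeff_iterate_pderiv, coeff_zero, (CharP.cast_eq_zero_iff R p _).2, mul_zero]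
  exact (Nat.dvd_factorial (Nat.pos_of_ne_zero hp) le_rfl).trans (Nat.factorial_dvd_descFactorial _ _)

theorem iterate_pderiv_sum [CommSemiring R] {ι : Type*} (i : σ) (k : ℕ) (s : Finset ι)
    (f : ι → MvPolynomial σ R) :
    (pderiv i)^[k] (∑ b ∈ s, f b) = ∑ b ∈ s, (pderiv i)^[k] (f b) := by
  simp_rw [← Derivation.coeFn_coe, ← Module.End.pow_apply, map_sum]

theorem pderiv_comm [CommRing R] (i j : σ) (f : MvPolynomial σ R) :
    pderiv i (pderiv j f) = pderiv j (pderiv i f) := by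
  have : ⁅pderiv (R := R) i, pderiv (R := R) j⁆ = 0 := by
    classical
    refine derivation_ext fun k => ?_
    simp [Derivation.commutator_apply, pderiv_X, Pi.single_apply, apply_ite]
  simpa [Derivation.commutator_apply, sub_eq_zero] using congr($this f)

theorem totalDegree_pderiv_le [CommSemiring R] (i : σ) (f : MvPolynomial σ R) :
    (pderiv i f).totalDegree ≤ f.totalDegree := by
  refine Finset.sup_le fun d hd => ?_
  have hd' : d + Finsupp.single i 1 ∈ f.support := by
    rw [mem_support_iff, coeff_pderiv] at hd
    exact mem_support_iff.2 (left_ne_zero_of_mul hd)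
  refine le_trans ?_ (le_totalDegree hd')
  simp [Finsupp.sum_add_index']

theorem pderiv_pow_eq_zero [CommSemiring R] {n : ℕ} (hn : (n : R) = 0) (i : σ)
    (f : MvPolynomial σ R) : pderiv i (f ^ n) = 0 := by
  rw [pderiv_pow, ← map_natCast C, hn, map_zero, zero_mul, zero_mul]

theorem dvd_of_pderiv_eq_zero [CommRing R] [NoZeroDivisors R] (p : ℕ) [CharP R p] {i : σ}
    {f : MvPolynomial σ R} (hf : pderiv i f = 0) {d : σ →₀ ℕ} (hd : d ∈ f.support) : p ∣ d i := by
  classical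
  rcases Nat.eq_zero_or_pos (d i) with hdi | hdi
  · simp [hdi]
  have hsplit : d - Finsupp.single i 1 + Finsupp.single i 1 = d :=
    tsub_add_cancel_of_le (Finsupp.single_le_iff.2 hdi)
  have hcoeff := congr(coeff (d - Finsupp.single i 1) $hf)
  rw [coeff_pderiv, hsplit, coeff_zero] at hcoeff
  have hcast : (((d - Finsupp.single i 1 : σ →₀ ℕ) i : ℕ) : R) + 1 = (d i : R) := by
    rw [Finsupp.tsub_apply, Finsupp.single_eq_same, ← Nat.cast_add_one, Nat.sub_one_add_one hdi.ne']
  rw [hcast] at hcoeff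
  exact (CharP.cast_eq_zero_iff R p _).1
    ((mul_eq_zero.1 hcoeff).resolve_left (mem_support_iff.1 hd))

theorem mem_adjoin_X_pow_of_pderiv_eq_zero [CommRing R] [NoZeroDivisors R] (p : ℕ) [CharP R p]
    {f : MvPolynomial σ R} (hf : ∀ i, pderiv i f = 0) :
    f ∈ Algebra.adjoin R (Set.range fun i => (X i ^ p : MvPolynomial σ R)) := by
  rw [f.as_sum]
  refine Subalgebra.sum_mem _ fun d hd => ?_
  rw [monomial_eq]
  refine mul_mem (Subalgebra.algebraMap_mem _ _) (Subalgebra.prod_mem _ fun i _ => ?_)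
  obtain ⟨k, hk⟩ := dvd_of_pderiv_eq_zero p (hf i) hd
  change X i ^ d i ∈ _
  rw [hk, pow_mul]
  exact pow_mem (Algebra.subset_adjoin (Set.mem_range_self i)) k

theorem pderiv_sum_inv_mul_pow_succ {K : Type*} [Field K] (p : ℕ) [CharP K p] (i : σ)
    (t : MvPolynomial σ K) (c : ℕ → MvPolynomial σ K) (hc : ∀ k, pderiv i (c k) = 0) :
    pderiv i (∑ k ∈ range (p - 1), C ((k + 1 : ℕ) : K)⁻¹ * c k * t ^ (k + 1)) =
      pderiv i t * ∑ k ∈ range (p - 1), c k * t ^ k := by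
  rw [map_sum, mul_sum]
  refine sum_congr rfl fun k hk => ?_
  have hk1 : ((k + 1 : ℕ) : K) ≠ 0 := by
    rw [Ne, CharP.cast_eq_zero_iff K p]
    exact fun h => (Nat.le_of_dvd k.succ_pos h).not_gt (by simp at hk; omega)
  rw [pderiv_mul, pderiv_C_mul, hc, pderiv_pow, ← map_natCast C, add_tsub_cancel_right]
  calc _ = C (((k + 1 : ℕ) : K)⁻¹ * ((k + 1 : ℕ) : K)) * (c k * t ^ k * pderiv i t) := by
        rw [map_mul]; ring
    _ = _ := by rw [inv_mul_cancel₀ hk1, map_one]; ring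

theorem eq_zero_of_pderiv_eq_sum_mul_pow {K : Type*} [Field K] {p : ℕ} (hp : p.Prime) [CharP K p]
    {i : σ} {t : MvPolynomial σ K} (ht : pderiv i (pderiv i t) = 0) (ht' : pderiv i t ≠ 0)
    {c : ℕ → MvPolynomial σ K} (hc : ∀ k, pderiv i (c k) = 0) {f : MvPolynomial σ K}
    (hf : pderiv i f = ∑ k ∈ range p, c k * t ^ k) : c (p - 1) = 0 := by
  have hvanish := iterate_pderiv_eq_zero_of_charP p hp.ne_zero i f
  obtain ⟨m, rfl⟩ : ∃ m, p = m + 1 := ⟨p - 1, (Nat.sub_add_cancel hp.one_le).symm⟩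
  have hfact : (m.factorial : MvPolynomial σ K) ≠ 0 := by
    rw [Ne, CharP.cast_eq_zero_iff _ (m + 1), hp.dvd_factorial]
    omega
  rw [Function.iterate_succ_apply, hf, iterate_pderiv_sum, sum_range_succ,
    sum_eq_zero fun k hk => ?_, zero_add, (pderiv i).iterate_mul_pow (hc m) ht,
    Nat.descFactorial_self, Nat.sub_self, pow_zero, mul_one, nsmul_eq_mul] at hvanish
  · simpa [hfact, ht'] using hvanish
  · rw [(pderiv i).iterate_mul_pow (hc k) ht, Nat.descFactorial_eq_zero_iff_lt.2 (by simpa using hk),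
      zero_smul]

end MvPolynomial

noncomputable def dicksonInvariant (F : Type*) [Field F] [Fintype F] : MvPolynomial (Fin 2) F :=
  X 0 ^ Fintype.card F * X 1 - X 0 * X 1 ^ Fintype.card F

section SerreOperator

variable {F : Type*} [Field F] [Fintype F]

theorem pderiv_X_pow_card (i j : Fin 2) :
    pderiv i (X j ^ Fintype.card F : MvPolynomial (Fin 2) F) = 0 :=
  pderiv_pow_eq_zero (FiniteField.cast_card_eq_zero F) i _

theorem pderiv_zero_dicksonInvariant :
    pderiv 0 (dicksonInvariant F) = -X 1 ^ Fintype.card F := by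
  rw [dicksonInvariant, map_sub, pderiv_mul, pderiv_mul, pderiv_X_pow_card, pderiv_X_pow_card]
  simp

theorem pderiv_one_dicksonInvariant :
    pderiv 1 (dicksonInvariant F) = X 0 ^ Fintype.card F := by
  rw [dicksonInvariant, map_sub, pderiv_mul, pderiv_mul, pderiv_X_pow_card, pderiv_X_pow_card]
  simp

theorem serreD_eq_zero_of_mem_adjoin (p : ℕ) [CharP F p] {f : MvPolynomial (Fin 2) F}
    (hf : f ∈ Algebra.adjoin F {X 0 ^ p, X 1 ^ p, dicksonInvariant F}) : serreD F f = 0 := by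
  induction hf using Algebra.adjoin_induction with
  | mem x hx =>
    rcases hx with rfl | rfl | rfl
    · simp [serreD, pderiv_pow_eq_zero (CharP.cast_eq_zero F p)]
    · simp [serreD, pderiv_pow_eq_zero (CharP.cast_eq_zero F p)]
    · rw [serreD, pderiv_zero_dicksonInvariant, pderiv_one_dicksonInvariant]
      ring
  | algebraMap r => simp [serreD]
  | add x y _ _ hx hy =>
    simp only [serreD, map_add] at *
    linear_combination hx + hy
  | mul x y _ _ hx hy =>
    simp only [serreD, pderiv_mul] at *
    linear_combination y * hx + x * hy

theorem exists_pderiv_eq_of_serreD_eq_zero {f : MvPolynomial (Fin 2) F} (hf : serreD F f = 0) :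
    ∃ h, pderiv 1 f = X 0 ^ Fintype.card F * h ∧ pderiv 0 f = -(X 1 ^ Fintype.card F * h) := by
  rw [serreD] at hf
  have hdvd : X 0 ^ Fintype.card F ∣ X 1 ^ Fintype.card F * pderiv 1 f :=
    ⟨-pderiv 0 f, by linear_combination hf⟩
  have hX : ¬ (X 0 : MvPolynomial (Fin 2) F) ∣ X 1 ^ Fintype.card F := fun h => by
    simpa using (X_prime (i := (0 : Fin 2))).dvd_of_dvd_pow h
  obtain ⟨h, hh⟩ := (X_prime (i := (0 : Fin 2))).pow_dvd_of_dvd_mul_left _ hX hdvd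
  refine ⟨h, hh, mul_left_cancel₀ (pow_ne_zero (Fintype.card F) (X_ne_zero (R := F) 0)) ?_⟩
  rw [hh] at hf
  linear_combination hf

theorem serreD_eq_zero_of_pderiv_eq {f h : MvPolynomial (Fin 2) F}
    (h1 : pderiv 1 f = X 0 ^ Fintype.card F * h) (h0 : pderiv 0 f = -(X 1 ^ Fintype.card F * h)) :
    serreD F h = 0 := by
  have hcomm := pderiv_comm 0 1 f
  rw [h1, h0, map_neg, pderiv_mul, pderiv_mul, pderiv_X_pow_card, pderiv_X_pow_card] at hcomm
  rw [serreD]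
  linear_combination hcomm

theorem totalDegree_lt_of_pderiv_eq {f h : MvPolynomial (Fin 2) F}
    (h1 : pderiv 1 f = X 0 ^ Fintype.card F * h) (hh : h ≠ 0) : h.totalDegree < f.totalDegree := by
  have hdeg := totalDegree_pderiv_le 1 f
  rw [h1, totalDegree_mul_of_isDomain (pow_ne_zero _ (X_ne_zero 0)) hh, totalDegree_X_pow] at hdeg
  have := Fintype.card_pos (α := F)
  omega

-- Vanishing of both partial derivatives is how `c k ∈ F[X^p, Y^p]` is expressed.
def DicksonExpansion (p : ℕ) (f : MvPolynomial (Fin 2) F) : Prop :=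
  ∃ c : ℕ → MvPolynomial (Fin 2) F,
    (∀ k i, pderiv i (c k) = 0) ∧ f = ∑ k ∈ range p, c k * dicksonInvariant F ^ k

namespace DicksonExpansion

variable {p : ℕ}

theorem zero : DicksonExpansion p (0 : MvPolynomial (Fin 2) F) :=
  ⟨0, fun _ _ => map_zero _, by simp⟩

theorem mem_adjoin [CharP F p] {f : MvPolynomial (Fin 2) F} (hf : DicksonExpansion p f) :
    f ∈ Algebra.adjoin F {X 0 ^ p, X 1 ^ p, dicksonInvariant F} := by
  obtain ⟨c, hc, rfl⟩ := hf
  have hA : Algebra.adjoin F (Set.range fun i => (X i ^ p : MvPolynomial (Fin 2) F)) ≤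
      Algebra.adjoin F {X 0 ^ p, X 1 ^ p, dicksonInvariant F} := by
    refine Algebra.adjoin_mono ?_
    rintro _ ⟨i, rfl⟩
    fin_cases i <;> simp
  refine Subalgebra.sum_mem _ fun k _ => mul_mem ?_ (pow_mem (Algebra.subset_adjoin (by simp)) k)
  exact hA (mem_adjoin_X_pow_of_pderiv_eq_zero p (hc k))

theorem of_pderiv_eq (hp : p.Prime) [CharP F p] {f h : MvPolynomial (Fin 2) F}
    (hh : DicksonExpansion p h) (h1 : pderiv 1 f = X 0 ^ Fintype.card F * h)
    (h0 : pderiv 0 f = -(X 1 ^ Fintype.card F * h)) : DicksonExpansion p f := by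
  obtain ⟨c, hc, rfl⟩ := hh
  have hX0 : (X 0 ^ Fintype.card F : MvPolynomial (Fin 2) F) ≠ 0 := pow_ne_zero _ (X_ne_zero 0)
  have htop : c (p - 1) = 0 := by
    refine (mul_eq_zero.1 (eq_zero_of_pderiv_eq_sum_mul_pow hp (i := 1) (t := dicksonInvariant F)
      (c := fun k => X 0 ^ Fintype.card F * c k) ?_ ?_ ?_ (f := f) ?_)).resolve_left hX0
    · rw [pderiv_one_dicksonInvariant, pderiv_X_pow_card]
    · rwa [pderiv_one_dicksonInvariant]
    · intro k
      rw [pderiv_mul, pderiv_X_pow_card, hc, zero_mul, mul_zero, add_zero]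
    · simp_rw [h1, mul_sum, mul_assoc]
  obtain ⟨m, rfl⟩ : ∃ m, p = m + 1 := ⟨p - 1, (Nat.sub_add_cancel hp.one_le).symm⟩
  rw [Nat.add_sub_cancel] at htop
  set g := ∑ k ∈ range m, C ((k + 1 : ℕ) : F)⁻¹ * c k * dicksonInvariant F ^ (k + 1) with hg
  have hsum : ∑ k ∈ range (m + 1), c k * dicksonInvariant F ^ k =
      ∑ k ∈ range m, c k * dicksonInvariant F ^ k := by
    rw [sum_range_succ, htop, zero_mul, add_zero]
  have hgderiv := fun i => pderiv_sum_inv_mul_pow_succ (m + 1) i (dicksonInvariant F) c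
    (fun k => hc k i)
  simp only [Nat.add_sub_cancel, ← hg, ← hsum] at hgderiv
  refine ⟨fun | 0 => f - g | k + 1 => C ((k + 1 : ℕ) : F)⁻¹ * c k, ?_, ?_⟩
  · rintro (_ | k) i
    · fin_cases i
      · simp [hgderiv, h0, pderiv_zero_dicksonInvariant]
      · simp [hgderiv, h1, pderiv_one_dicksonInvariant]
    · simp [hc]
  · rw [sum_range_succ', pow_zero, mul_one]
    exact (add_sub_cancel g f).symm

end DicksonExpansion

theorem dicksonExpansion_of_serreD_eq_zero {p : ℕ} (hp : p.Prime) [CharP F p]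
    {f : MvPolynomial (Fin 2) F} (hf : serreD F f = 0) : DicksonExpansion p f := by
  induction hN : f.totalDegree using Nat.strong_induction_on generalizing f with
  | _ N ih =>
  obtain ⟨h, h1, h0⟩ := exists_pderiv_eq_of_serreD_eq_zero hf
  refine DicksonExpansion.of_pderiv_eq hp ?_ h1 h0
  rcases eq_or_ne h 0 with rfl | hne
  · exact DicksonExpansion.zero
  · exact ih _ (hN ▸ totalDegree_lt_of_pderiv_eq h1 hne) (serreD_eq_zero_of_pderiv_eq h1 h0) rfl

end SerreOperator

theorem serreD_ker_general (F : Type*) [Field F] [Fintype F] (p : ℕ) (hp : p.Prime)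
    [CharP F p] (f : MvPolynomial (Fin 2) F) :
    serreD F f = 0 ↔
      f ∈ Algebra.adjoin F
        ({X 0 ^ p, X 1 ^ p,
          X 0 ^ Fintype.card F * X 1 - X 0 * X 1 ^ Fintype.card F} :
          Set (MvPolynomial (Fin 2) F)) :=
  ⟨fun hf => (dicksonExpansion_of_serreD_eq_zero hp hf).mem_adjoin, serreD_eq_zero_of_mem_adjoin p⟩

/-- The kernel of `D : F_q[X, Y] → F_q[X, Y]` is exactly the subring
`F_q[X^p, Y^p, θ_q]`, where `θ_q = X^q Y − X Y^q` and `p` is the characteristic. -/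
theorem serreD_ker (F : Type*) [Field F] [Fintype F] (p n : ℕ) (hp : p.Prime)
    [CharP F p] (hq : Fintype.card F = p ^ n) (f : MvPolynomial (Fin 2) F) :
    serreD F f = 0 ↔
      f ∈ Algebra.adjoin F
        ({X 0 ^ p, X 1 ^ p,
          X 0 ^ Fintype.card F * X 1 - X 0 * X 1 ^ Fintype.card F} :
          Set (MvPolynomial (Fin 2) F)) :=
  serreD_ker_general F p hp f
end

section
/- The ring F_q[X^p, Y^p, θ_q], with θ_q = X^q Y − X Y^q, is integrally closed in its field of fractions; equivalently, the hypersurface in A^3 defined by X_1^q X_2 − X_1 X_2^q − X_3^p = 0 is normal. -/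
/-!
With `q = |F|`, the derivation `D = X^q ∂_X + Y^q ∂_Y` of `F[X, Y]` is `f ↦ ∂(f, θ_q)/∂(X, Y)`
in characteristic `p`, so it kills `X^p`, `Y^p` and `θ_q`. Conversely its kernel is exactly
`F[X^p, Y^p, θ_q]`: if `D f = 0` and `X^a Y^b` is the lex-leading monomial of `f`, comparing
coefficients in `D f = 0` gives `p ∣ a` and `q s ≤ a` for `s = b mod p`, so `f` has the same
leading term as `c X^(a - q s) Y^(b - s) θ_q^s`, an element of the ring, and one descends.

The kernel of a derivation of a domain is closed under division: `D (w s) = s D w` when `D s = 0`.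
A subring of the integrally closed domain `F[X, Y]` closed under division is integrally closed:
a fraction `r / s` integral over it is integral over `F[X, Y]`, hence equals some `w ∈ F[X, Y]`,
and `w s = r` puts `w` in the subring.
-/

open MvPolynomial

namespace Derivation

variable {R A : Type*} [CommSemiring R] [CommSemiring A] [Algebra R A]

def constants (D : Derivation R A A) : Subalgebra R A where
  carrier := {a | D a = 0}
  mul_mem' {a b} ha hb := by simp_all [leibniz]
  add_mem' {a b} ha hb := by simp_all
  algebraMap_mem' := D.map_algebraMap

@[simp]
theorem mem_constants {D : Derivation R A A} {a : A} : a ∈ D.constants ↔ D a = 0 := Iff.rfl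

theorem mem_constants_of_mul_mem [NoZeroDivisors A] {D : Derivation R A A} {w s : A}
    (hs : s ∈ D.constants) (hs0 : s ≠ 0) (hws : w * s ∈ D.constants) : w ∈ D.constants := by
  rw [mem_constants, leibniz, hs, smul_zero, zero_add, smul_eq_mul] at hws
  exact (mul_eq_zero.mp hws).resolve_left hs0

end Derivation

namespace MonomialOrder

variable {σ R : Type*} [CommRing R] {m : MonomialOrder σ}

theorem degree_sub_lt_of_leadingTerm_eq {f g : MvPolynomial σ R}
    (h : m.leadingTerm f = m.leadingTerm g) (hfg : f ≠ g) :
    m.degree (f - g) ≺[m] m.degree f := by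
  have hdeg : m.degree g = m.degree f := by
    rw [← m.degree_leadingTerm g, ← h, m.degree_leadingTerm]
  by_cases hd : m.degree f = 0
  · have eq_leadingTerm {k : MvPolynomial σ R} (hk : m.degree k = 0) : k = m.leadingTerm k := by
      rw [m.eq_C_of_degree_eq_zero hk, leadingTerm_C]
    exact absurd (by rw [eq_leadingTerm hd, eq_leadingTerm (hdeg.trans hd), h]) hfg
  have hsplit : f - g = (f - m.leadingTerm f) - (g - m.leadingTerm g) := by rw [h]; ring
  rw [hsplit]
  refine lt_of_le_of_lt m.degree_sub_le (sup_lt_iff.mpr ⟨?_, ?_⟩)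
  · exact m.degree_sub_leadingTerm_lt_degree hd
  · rw [← hdeg]; exact m.degree_sub_leadingTerm_lt_degree (hdeg ▸ hd)

theorem mem_of_forall_exists_leadingTerm_eq {S : Type*} [SetLike S (MvPolynomial σ R)]
    [AddSubgroupClass S (MvPolynomial σ R)] {K T : S} (hTK : ∀ g ∈ T, g ∈ K)
    (h : ∀ f ∈ K, f ≠ 0 → ∃ g ∈ T, m.leadingTerm g = m.leadingTerm f) : ∀ f ∈ K, f ∈ T := by
  intro f hf
  induction hd : m.toSyn (m.degree f) using WellFoundedLT.induction generalizing f with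
  | _ d ih =>
  by_cases hf0 : f = 0
  · exact hf0 ▸ zero_mem T
  obtain ⟨g, hgT, hg⟩ := h f hf hf0
  by_cases hfg : f = g
  · exact hfg ▸ hgT
  have hlt := m.degree_sub_lt_of_leadingTerm_eq hg.symm hfg
  rw [← sub_add_cancel f g]
  exact add_mem (ih _ (hd ▸ hlt) (f - g) (sub_mem hf (hTK g hgT)) rfl) hgT

theorem leadingTerm_pow [NoZeroDivisors R] (f : MvPolynomial σ R) (n : ℕ) :
    m.leadingTerm (f ^ n) = m.leadingTerm f ^ n := by
  induction n with
  | zero => rw [pow_zero, pow_zero, ← C_1, leadingTerm_C]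
  | succ n ih => rw [pow_succ, leadingTerm_mul, ih, pow_succ]

end MonomialOrder

/-- When `e i ≤ r`, both sides vanish (the right through truncated subtraction). -/
theorem MvPolynomial.coeff_X_pow_succ_mul_pderiv {σ R : Type*} [CommSemiring R] (i : σ) (r : ℕ)
    (f : MvPolynomial σ R) (e : σ →₀ ℕ) :
    coeff e (X i ^ (r + 1) * pderiv i f) =
      ((e i - r : ℕ) : R) * coeff (e - Finsupp.single i r) f := by
  classical
  rw [X_pow_eq_monomial, mul_comm, coeff_mul_monomial', coeff_pderiv]
  split_ifs with h
  · rw [Finsupp.single_le_iff] at h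
    have he : e - Finsupp.single i (r + 1) + Finsupp.single i 1 = e - Finsupp.single i r := by
      ext j
      by_cases hj : j = i
      · subst hj; simp; omega
      · simp [Ne.symm hj]
    rw [he, mul_one, mul_comm, ← Nat.cast_succ]
    congr 2
    simp
    omega
  · rw [Finsupp.single_le_iff, not_le] at h
    rw [Nat.sub_eq_zero_of_le (by omega)]
    simp

theorem Subalgebra.isIntegrallyClosed_of_mul_mem {k B : Type*} [CommRing k] [CommRing B]
    [IsDomain B] [IsIntegrallyClosed B] [Algebra k B] (R : Subalgebra k B)
    (h : ∀ w s : B, s ∈ R → s ≠ 0 → w * s ∈ R → w ∈ R) : IsIntegrallyClosed R := by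
  let L := FractionRing B
  have hinj : Function.Injective (algebraMap R L) := by
    rw [IsScalarTower.algebraMap_eq R B L]
    exact (IsFractionRing.injective B L).comp Subtype.val_injective
  let φ : FractionRing R →ₐ[R] L := IsFractionRing.liftAlgHom (g := Algebra.ofId R L) hinj
  have hφ (t : R) : φ (algebraMap R _ t) = algebraMap B L t :=
    (φ.commutes t).trans (IsScalarTower.algebraMap_apply R B L t)
  rw [isIntegrallyClosed_iff (FractionRing R)]
  intro x hx
  obtain ⟨w, hw⟩ := IsIntegrallyClosed.isIntegral_iff.mp ((hx.map φ).tower_top (A := B))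
  obtain ⟨r, s, hs, rfl⟩ := IsFractionRing.div_surjective (A := R) x
  have hs0 : (s : B) ≠ 0 := by simpa using nonZeroDivisors.ne_zero hs
  have hws : w * s = r := by
    apply IsFractionRing.injective B L
    rw [map_mul, hw, map_div₀, hφ, hφ,
      div_mul_cancel₀ _ ((map_ne_zero_iff _ (IsFractionRing.injective B L)).mpr hs0)]
  exact ⟨⟨w, h w s s.2 hs0 (hws ▸ r.2)⟩, (φ : _ →+* L).injective ((hφ _).trans hw)⟩

open MonomialOrder

namespace ThetaAlgebra

variable {F : Type*} [CommRing F]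

noncomputable def theta (q : ℕ) : MvPolynomial (Fin 2) F := X 0 ^ q * X 1 - X 0 * X 1 ^ q

noncomputable def thetaDerivation (q : ℕ) :
    Derivation F (MvPolynomial (Fin 2) F) (MvPolynomial (Fin 2) F) :=
  (X 0 ^ q : MvPolynomial (Fin 2) F) • pderiv 0 + (X 1 ^ q : MvPolynomial (Fin 2) F) • pderiv 1

theorem thetaDerivation_apply (q : ℕ) (f : MvPolynomial (Fin 2) F) :
    thetaDerivation q f = X 0 ^ q * pderiv 0 f + X 1 ^ q * pderiv 1 f := rfl

theorem adjoin_le_constants {p q : ℕ} [CharP F p] (hpq : p ∣ q) :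
    Algebra.adjoin F {X 0 ^ p, X 1 ^ p, theta q} ≤ (thetaDerivation q).constants := by
  have hq : (q : MvPolynomial (Fin 2) F) = 0 := (CharP.cast_eq_zero_iff _ p q).mpr hpq
  rw [Algebra.adjoin_le_iff]
  rintro _ (rfl | rfl | rfl) <;> simp [thetaDerivation_apply, theta, hq]
  ring

noncomputable def mon (a b : ℕ) : Fin 2 →₀ ℕ := Finsupp.single 0 a + Finsupp.single 1 b

@[simp] theorem mon_apply_zero (a b : ℕ) : mon a b 0 = a := by simp [mon]

@[simp] theorem mon_apply_one (a b : ℕ) : mon a b 1 = b := by simp [mon]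

theorem mon_eta (d : Fin 2 →₀ ℕ) : mon (d 0) (d 1) = d := by
  ext i; fin_cases i <;> simp

theorem mon_sub_single_zero (a b r : ℕ) : mon a b - Finsupp.single 0 r = mon (a - r) b := by
  ext i; fin_cases i <;> simp

theorem mon_sub_single_one (a b r : ℕ) : mon a b - Finsupp.single 1 r = mon a (b - r) := by
  ext i; fin_cases i <;> simp

theorem mon_lt_mon {a b a' b' : ℕ} (h : a < a') : mon a b ≺[lex] mon a' b' := by
  rw [lex_lt_iff, Finsupp.Lex.lt_iff]
  exact ⟨0, fun j hj => absurd hj (Fin.not_lt_zero j), by simpa using h⟩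

theorem coeff_thetaDerivation (r a b : ℕ) (f : MvPolynomial (Fin 2) F) :
    coeff (mon a b) (thetaDerivation (r + 1) f) =
      ((a - r : ℕ) : F) * coeff (mon (a - r) b) f +
        ((b - r : ℕ) : F) * coeff (mon a (b - r)) f := by
  rw [thetaDerivation_apply, coeff_add, coeff_X_pow_succ_mul_pderiv, coeff_X_pow_succ_mul_pderiv,
    mon_sub_single_zero, mon_sub_single_one, mon_apply_zero, mon_apply_one]

theorem natCast_add_mul_ne_zero {p r : ℕ} [CharP F p] (hr : ((r + 1 : ℕ) : F) = 0) {b k : ℕ}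
    (hk : k < b % p) :
    ((b + k * r : ℕ) : F) ≠ 0 := by
  have hp : p ≠ 0 := by
    rintro rfl
    exact Nat.succ_ne_zero r (Nat.eq_zero_of_zero_dvd ((CharP.cast_eq_zero_iff F 0 _).mp hr))
  have hcast : ((b + k * r : ℕ) : F) = ((b % p - k : ℕ) : F) := by
    push_cast [Nat.cast_sub hk.le] at hr ⊢
    rw [CharP.cast_eq_mod F p b]
    linear_combination k * hr
  rw [hcast, Ne, CharP.cast_eq_zero_iff F p]
  intro hdvd
  have := Nat.le_of_dvd (by omega) hdvd
  have := Nat.mod_lt b (Nat.pos_of_ne_zero hp)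
  omega

section LeadingExponent

variable [IsDomain F] {p r : ℕ} [CharP F p] {f : MvPolynomial (Fin 2) F}

theorem dvd_degree_zero (hr : r ≠ 0) (hf : thetaDerivation (r + 1) f = 0) (hf0 : f ≠ 0) :
    p ∣ lex.degree f 0 := by
  set a := lex.degree f 0
  set b := lex.degree f 1
  have hc : coeff (mon a b) f ≠ 0 := by rwa [mon_eta, lex.coeff_degree_ne_zero_iff]
  have hvan : coeff (mon (a + r) (b - r)) f = 0 :=
    lex.coeff_eq_zero_of_lt (mon_eta (lex.degree f) ▸ mon_lt_mon (by omega))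
  have hrel := coeff_thetaDerivation r (a + r) b f
  rw [hf, coeff_zero, Nat.add_sub_cancel, hvan, mul_zero, add_zero, eq_comm] at hrel
  exact (CharP.cast_eq_zero_iff F p a).mp ((mul_eq_zero.mp hrel).resolve_right hc)

/-- With `(a, b)` the leading exponent of `f` and `c_k` its coefficient at `(a - k r, b + k r)`,
the coefficient of `D f` at `(a - k r, b + (k + 1) r)` is `(a - (k + 1) r) c_(k+1) + (b + k r) c_k`,
and `b + k r ≡ (b mod p) - k ≢ 0 (mod p)` for `k < b mod p`. -/
theorem coeff_mon_sub_add_ne_zero (hr : ((r + 1 : ℕ) : F) = 0)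
    (hf : thetaDerivation (r + 1) f = 0) (hf0 : f ≠ 0) {k : ℕ} (hk : k ≤ lex.degree f 1 % p) :
    k * r ≤ lex.degree f 0 ∧
      coeff (mon (lex.degree f 0 - k * r) (lex.degree f 1 + k * r)) f ≠ 0 := by
  set a := lex.degree f 0
  set b := lex.degree f 1
  induction k with
  | zero => simpa [a, b, mon_eta] using lex.coeff_degree_ne_zero_iff.mpr hf0
  | succ k ih =>
    obtain ⟨hka, hck⟩ := ih (by omega)
    have hrel := coeff_thetaDerivation r (a - k * r) (b + k * r + r) f
    rw [hf, coeff_zero, Nat.add_sub_cancel, eq_comm] at hrel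
    have hY : ((b + k * r : ℕ) : F) * coeff (mon (a - k * r) (b + k * r)) f ≠ 0 :=
      mul_ne_zero (natCast_add_mul_ne_zero hr (by omega)) hck
    obtain ⟨hX, hcX⟩ : ((a - k * r - r : ℕ) : F) ≠ 0 ∧
        coeff (mon (a - k * r - r) (b + k * r + r)) f ≠ 0 :=
      mul_ne_zero_iff.mp fun h0 => hY (by rwa [h0, zero_add] at hrel)
    rw [add_one_mul, ← Nat.sub_sub, ← add_assoc]
    refine ⟨?_, hcX⟩
    have : a - k * r - r ≠ 0 := fun h0 => hX (by rw [h0, Nat.cast_zero])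
    omega

theorem mul_mod_le_degree_zero (hr : ((r + 1 : ℕ) : F) = 0) (hf : thetaDerivation (r + 1) f = 0)
    (hf0 : f ≠ 0) : (r + 1) * (lex.degree f 1 % p) ≤ lex.degree f 0 := by
  set a := lex.degree f 0
  set s := lex.degree f 1 % p
  have hr0 : r ≠ 0 := by rintro rfl; simp at hr
  have hpa : (a : F) = 0 := (CharP.cast_eq_zero_iff F p a).mpr (dvd_degree_zero hr0 hf hf0)
  have hsa : s * r ≤ a := (coeff_mon_sub_add_ne_zero hr hf hf0 le_rfl).1
  have hcast : ((a - s * r : ℕ) : F) = (s : F) := by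
    push_cast [Nat.cast_sub hsa] at hr hpa ⊢
    linear_combination hpa - s * hr
  have hmod : (a - s * r) % p = s := by
    rw [(CharP.natCast_eq_natCast F p).mp hcast, Nat.mod_mod]
  have := Nat.mod_le (a - s * r) p
  rw [add_one_mul, mul_comm]
  omega

end LeadingExponent

theorem monomial_mon (a b : ℕ) (c : F) : monomial (mon a b) c = C c * X 0 ^ a * X 1 ^ b := by
  simp [mon, X_pow_eq_monomial, C_mul_monomial, monomial_mul]

theorem leadingTerm_theta [Nontrivial F] {q : ℕ} (hq : 1 < q) :
    lex.leadingTerm (theta q : MvPolynomial (Fin 2) F) = X 0 ^ q * X 1 := by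
  have e1 : (X 0 ^ q * X 1 : MvPolynomial (Fin 2) F) = monomial (mon q 1) 1 := by
    simp [monomial_mon]
  have e2 : (X 0 * X 1 ^ q : MvPolynomial (Fin 2) F) = monomial (mon 1 q) 1 := by
    simp [monomial_mon]
  have hlt : lex.degree (monomial (mon 1 q) (1 : F)) ≺[lex]
      lex.degree (monomial (mon q 1) (1 : F)) := by
    classical
    simpa [degree_monomial] using mon_lt_mon hq
  rw [theta, e1, e2, leadingTerm, lex.degree_sub_of_lt hlt, lex.leadingCoeff_sub_of_lt hlt]
  exact lex.leadingTerm_monomial _ _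

theorem exists_mem_adjoin_leadingTerm_eq [IsDomain F] {p q a b : ℕ} (hpq : p ∣ q) (hq : 1 < q)
    (hpa : p ∣ a) (hqa : q * (b % p) ≤ a) (c : F) :
    ∃ g ∈ Algebra.adjoin F {X 0 ^ p, X 1 ^ p, theta q},
      lex.leadingTerm g = monomial (mon a b) c := by
  set s := b % p
  obtain ⟨α, hα⟩ : p ∣ a - q * s := Nat.dvd_sub hpa (hpq.mul_right s)
  have hX (i : Fin 2) (n : ℕ) : lex.leadingTerm (X i ^ n : MvPolynomial (Fin 2) F) = X i ^ n := by
    rw [X_pow_eq_monomial, leadingTerm_monomial]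
  refine ⟨C c * (X 0 ^ p) ^ α * (X 1 ^ p) ^ (b / p) * theta q ^ s, ?_, ?_⟩
  · refine mul_mem (mul_mem (mul_mem (Subalgebra.algebraMap_mem _ c) ?_) ?_) ?_ <;>
      exact pow_mem (Algebra.subset_adjoin (by simp)) _
  · simp only [leadingTerm_mul, leadingTerm_pow, leadingTerm_C, ← pow_mul, hX,
      leadingTerm_theta hq, monomial_mon]
    rw [show a = p * α + q * s by omega]
    conv_rhs => rw [← Nat.div_add_mod b p]
    ring

theorem constants_thetaDerivation_eq_adjoin [IsDomain F] {p q : ℕ} [CharP F p] (hpq : p ∣ q)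
    (hq : q ≠ 0) :
    (thetaDerivation q).constants = Algebra.adjoin F {X 0 ^ p, X 1 ^ p, theta q} := by
  have hq1 : 1 < q := by
    have : q ≠ 1 := by
      rintro rfl
      exact CharP.char_ne_one F p (Nat.dvd_one.mp hpq)
    omega
  refine le_antisymm (fun f hf => mem_of_forall_exists_leadingTerm_eq (m := lex)
    (fun g hg => adjoin_le_constants hpq hg) (fun f hf hf0 => ?_) f hf) (adjoin_le_constants hpq)
  obtain ⟨r, rfl⟩ := Nat.exists_eq_add_one_of_ne_zero hq
  have hr : ((r + 1 : ℕ) : F) = 0 := (CharP.cast_eq_zero_iff F p _).mpr hpq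
  obtain ⟨g, hg, hgf⟩ := exists_mem_adjoin_leadingTerm_eq hpq hq1
    (dvd_degree_zero (by omega) hf hf0) (mul_mod_le_degree_zero hr hf hf0) (lex.leadingCoeff f)
  exact ⟨g, hg, by rw [hgf, mon_eta]; rfl⟩

end ThetaAlgebra

open ThetaAlgebra in
theorem adjoin_Xp_Yp_theta_integrallyClosed_general (F : Type*) [Field F] [Fintype F]
    (p : ℕ) [CharP F p] :
    IsIntegrallyClosed
      (Algebra.adjoin F
        ({X 0 ^ p, X 1 ^ p,
          X 0 ^ Fintype.card F * X 1 - X 0 * X 1 ^ Fintype.card F} :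
          Set (MvPolynomial (Fin 2) F))) := by
  have hpq : p ∣ Fintype.card F :=
    (CharP.cast_eq_zero_iff F p _).mp (FiniteField.cast_card_eq_zero F)
  rw [← theta, ← constants_thetaDerivation_eq_adjoin hpq Fintype.card_ne_zero]
  exact Subalgebra.isIntegrallyClosed_of_mul_mem _ fun w s hs hs0 hws =>
    Derivation.mem_constants_of_mul_mem hs hs0 hws

/-- The ring `F_q[X^p, Y^p, θ_q]`, with `θ_q = X^q Y − X Y^q`, is integrally
closed in its field of fractions (i.e. the hypersurface
`X₁^q X₂ − X₁ X₂^q − X₃^p = 0` in `A³` is normal). -/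
theorem adjoin_Xp_Yp_theta_integrallyClosed (F : Type*) [Field F] [Fintype F]
    (p n : ℕ) (hp : p.Prime) [CharP F p] (hq : Fintype.card F = p ^ n) :
    IsIntegrallyClosed
      (Algebra.adjoin F
        ({X 0 ^ p, X 1 ^ p,
          X 0 ^ Fintype.card F * X 1 - X 0 * X 1 ^ Fintype.card F} :
          Set (MvPolynomial (Fin 2) F))) :=
  adjoin_Xp_Yp_theta_integrallyClosed_general F p
end

section
/- X does not lie in the field of fractions of the kernel of D inside F_q(X,Y); more precisely, if B = ker(D) ⊆ F_q[X,Y] where D(f) = X^q ∂f/∂X + Y^q ∂f/∂Y, then the field of fractions of B is a proper subfield of F_q(X,Y). -/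
/-
Since `D` obeys the Leibniz rule and `D X = X^q`, an element `g ∈ ker D` gives
`D (X g) = X^q g`, which vanishes only when `g = 0`.
-/

open MvPolynomial

section SerreD

variable (F : Type*) [Field F] [Fintype F]

theorem serreD_mul (f g : MvPolynomial (Fin 2) F) :
    serreD F (f * g) = serreD F f * g + f * serreD F g := by
  simp only [serreD, pderiv_mul]
  ring

theorem serreD_X_zero : serreD F (X 0) = X 0 ^ Fintype.card F := by
  simp [serreD, pderiv_X_of_ne (show (0 : Fin 2) ≠ 1 by decide)]

theorem serreD_X_zero_mul_of_serreD_eq_zero {g : MvPolynomial (Fin 2) F}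
    (hg : serreD F g = 0) : serreD F (X 0 * g) = X 0 ^ Fintype.card F * g := by
  rw [serreD_mul, serreD_X_zero, hg, mul_zero, add_zero]

end SerreD

/-- `X` does not lie in the field of fractions of `B = ker D` inside `F_q(X, Y)`:
there is no pair `f, g ∈ ker D` with `g ≠ 0` and `f = X · g`.  In particular the
field of fractions of `B` is a proper subfield of `F_q(X, Y)`. -/
theorem X_not_in_fractionField_of_kerD (F : Type*) [Field F] [Fintype F] :
    ¬ ∃ f g : MvPolynomial (Fin 2) F,
        serreD F f = 0 ∧ serreD F g = 0 ∧ g ≠ 0 ∧ f = X 0 * g := by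
  rintro ⟨f, g, hf, hg, hg0, rfl⟩
  rw [serreD_X_zero_mul_of_serreD_eq_zero F hg] at hf
  exact mul_ne_zero (pow_ne_zero _ (X_ne_zero 0)) hg0 hf
end

section
/- For integers k with 1 ≤ k ≤ p − 1, the restriction of D to homogeneous polynomials of degree k, D : V_k → V_{k+(q-1)}, is injective, where V_m denotes the space of homogeneous polynomials of degree m in F_q[X,Y]. -/
/-!
Compare the coefficients of `D f` at the monomial `X^m · X_i^q`. Every exponent of `f` is at
most `k < p ≤ q`, so the term `X_j^q ∂f/∂X_j` (`j ≠ i`) contributes nothing there, and what is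
left is `(m_i + 1) · coeff_{m + e_i} f`. Since `m_i + 1 ≤ k < p`, the factor is a unit, so every
non-constant coefficient of `f` vanishes; the constant one vanishes because `k ≥ 1`.
-/

open MvPolynomial

namespace MvPolynomial

open Finsupp

variable {σ R : Type*}

theorem coeff_add_single_X_pow_mul_pderiv_add [CommSemiring R] [DecidableEq σ] {i j : σ}
    (hji : j ≠ i) {n : ℕ} {m : σ →₀ ℕ} (hm : m j < n) (f : MvPolynomial σ R) :
    coeff (m + single i n) (X i ^ n * pderiv i f + X j ^ n * pderiv j f) =
      coeff (m + single i 1) f * (m i + 1) := by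
  have hle : ¬ single j n ≤ single i n + m := by
    simpa [single_le_iff, single_apply, hji.symm] using hm
  rw [add_comm m, coeff_add, X_pow_eq_monomial, coeff_monomial_mul, one_mul, coeff_pderiv,
    X_pow_eq_monomial, coeff_monomial_mul', if_neg hle, add_zero]

theorem IsHomogeneous.coeff_add_single_eq_zero_of_X_pow_mul_pderiv_add_eq_zero
    [CommRing R] [NoZeroDivisors R] [DecidableEq σ] {p k n : ℕ} [CharP R p]
    {f : MvPolynomial σ R} (hf : f.IsHomogeneous k) (hkp : k < p) (hkn : k ≤ n) {i j : σ}
    (hji : j ≠ i) (hD : X i ^ n * pderiv i f + X j ^ n * pderiv j f = 0) (m : σ →₀ ℕ) :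
    coeff (m + single i 1) f = 0 := by
  by_contra hc
  have hdeg : m.degree + 1 = k := by
    by_contra hne
    exact hc (hf.coeff_eq_zero (by simpa using hne))
  have hmi : ((m i + 1 : ℕ) : R) ≠ 0 := by
    rw [Ne, CharP.cast_eq_zero_iff R p]
    intro hdvd
    have := Nat.le_of_dvd (Nat.succ_pos _) hdvd
    have := le_degree i m
    omega
  have hmj : m j < n := by
    have := le_degree j m
    omega
  have hcoeff := congrArg (coeff (m + single i n)) hD
  rw [coeff_add_single_X_pow_mul_pderiv_add hji hmj, coeff_zero] at hcoeff
  exact hc ((mul_eq_zero.mp hcoeff).resolve_right (by exact_mod_cast hmi))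

theorem IsHomogeneous.eq_zero_of_forall_coeff_add_single_eq_zero [CommSemiring R]
    {f : MvPolynomial σ R} {k : ℕ} (hf : f.IsHomogeneous k) (hk : k ≠ 0)
    (h : ∀ i m, coeff (m + single i 1) f = 0) : f = 0 := by
  classical
  ext d
  rw [coeff_zero]
  obtain rfl | hd := eq_or_ne d 0
  · exact hf.coeff_eq_zero (by simpa using hk.symm)
  · obtain ⟨i, hi⟩ : ∃ i, d i ≠ 0 := by simpa [DFunLike.ext_iff] using hd
    have hsplit : d - single i 1 + single i 1 = d :=
      tsub_add_cancel_of_le (single_le_iff.mpr (Nat.one_le_iff_ne_zero.mpr hi))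
    rw [← hsplit]
    exact h i _

end MvPolynomial

theorem serreD_injective_on_homogeneous_general (F : Type*) [Field F] [Fintype F]
    (p : ℕ) [CharP F p]
    (k : ℕ) (hk1 : 1 ≤ k) (hk2 : k ≤ p - 1)
    (f : MvPolynomial (Fin 2) F) (hf : f.IsHomogeneous k)
    (h : serreD F f = 0) : f = 0 := by
  obtain ⟨r, -, hq⟩ := FiniteField.card F p
  have hkp : k < p := by omega
  have hkq : k ≤ Fintype.card F := hq ▸ hkp.le.trans (Nat.le_self_pow r.ne_zero p)
  have hD₀ : X 0 ^ Fintype.card F * pderiv 0 f + X 1 ^ Fintype.card F * pderiv 1 f = 0 := h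
  have hD₁ : X 1 ^ Fintype.card F * pderiv 1 f + X 0 ^ Fintype.card F * pderiv 0 f = 0 := by
    rw [add_comm]; exact h
  refine hf.eq_zero_of_forall_coeff_add_single_eq_zero (by omega) fun i m => ?_
  fin_cases i
  · exact hf.coeff_add_single_eq_zero_of_X_pow_mul_pderiv_add_eq_zero hkp hkq (by decide) hD₀ m
  · exact hf.coeff_add_single_eq_zero_of_X_pow_mul_pderiv_add_eq_zero hkp hkq (by decide) hD₁ m

/-- For `1 ≤ k ≤ p − 1` the restriction of `D` to homogeneous polynomials of
degree `k` is injective. -/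
theorem serreD_injective_on_homogeneous (F : Type*) [Field F] [Fintype F]
    (p n : ℕ) (hp : p.Prime) [CharP F p] (hq : Fintype.card F = p ^ n)
    (k : ℕ) (hk1 : 1 ≤ k) (hk2 : k ≤ p - 1)
    (f : MvPolynomial (Fin 2) F) (hf : f.IsHomogeneous k)
    (h : serreD F f = 0) : f = 0 :=
  serreD_injective_on_homogeneous_general F p k hk1 hk2 f hf h
end

section
/- For any integer k > q, the linear map τ_k sending a homogeneous polynomial f ∈ F_q[X,Y] of degree k to the induced function on F_q^2 (which is homogeneous of degree k modulo q−1 and vanishes at the origin) is surjective onto the space of functions F_q^2 → F_q that are homogeneous of degree k and vanish at (0,0). -/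
/-!
For `w ≠ 0` pick linear forms `ℓ` with `ℓ w = 1` and `L` vanishing exactly on the line `F ∙ w`.
Since `x ^ (q - 1) = 1` for `x ≠ 0`, the degree-`k` form
`D_w = ℓ ^ (k - (q - 1)) * (ℓ ^ (q - 1) - L ^ (q - 1))` takes the value `a ^ k` at `a • w` and
vanishes off `F ∙ w`; this is where `k ≥ q` is needed.
Homogeneity of `φ` then gives `φ w * D_w v = φ v` for `v ∈ F ∙ w`, and a vector `v ≠ 0` lies on
`F ∙ w` for exactly `q - 1` nonzero `w`, so `∑ w, φ w • D_w = (q - 1) • φ = -φ`.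
-/

open MvPolynomial Finset

theorem mem_span_singleton_iff_cross_eq_zero {F : Type*} [Field F] {v w : Fin 2 → F}
    (hw : w ≠ 0) : v ∈ F ∙ w ↔ w 1 * v 0 - w 0 * v 1 = 0 := by
  rw [Submodule.mem_span_singleton]
  constructor
  · rintro ⟨a, rfl⟩
    simp only [Pi.smul_apply, smul_eq_mul]
    ring
  · intro h
    obtain hw0 | hw1 : w 0 ≠ 0 ∨ w 1 ≠ 0 := by
      by_contra! hw0
      exact hw (funext (Fin.forall_fin_two.mpr hw0))
    · refine ⟨v 0 / w 0, funext (Fin.forall_fin_two.mpr ⟨div_mul_cancel₀ _ hw0, ?_⟩)⟩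
      simp only [Pi.smul_apply, smul_eq_mul]
      field_simp
      linear_combination h
    · refine ⟨v 1 / w 1, funext (Fin.forall_fin_two.mpr ⟨?_, div_mul_cancel₀ _ hw1⟩)⟩
      simp only [Pi.smul_apply, smul_eq_mul]
      field_simp
      linear_combination -h

section

variable {F : Type*} [Field F] [Fintype F] {k : ℕ}

theorem pow_sub_mul_sub_pow_card_sub_one [DecidableEq F] (hk : Fintype.card F ≤ k)
    (a b : F) :
    a ^ (k - (Fintype.card F - 1)) * (a ^ (Fintype.card F - 1) - b ^ (Fintype.card F - 1)) =
      if b = 0 then a ^ k else 0 := by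
  have hq : 1 < Fintype.card F := Fintype.one_lt_card
  split_ifs with hb
  · rw [hb, zero_pow (by omega), sub_zero, ← pow_add, Nat.sub_add_cancel (by omega)]
  · rcases eq_or_ne a 0 with rfl | ha
    · rw [zero_pow (by omega), zero_mul]
    · rw [FiniteField.pow_card_sub_one_eq_one a ha, FiniteField.pow_card_sub_one_eq_one b hb,
        sub_self, mul_zero]

theorem isHomogeneous_pow_sub_mul_sub_pow_card_sub_one {σ : Type*} {ℓ L : MvPolynomial σ F}
    (hℓ : ℓ.IsHomogeneous 1) (hL : L.IsHomogeneous 1) (hk : Fintype.card F - 1 ≤ k) :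
    (ℓ ^ (k - (Fintype.card F - 1)) *
      (ℓ ^ (Fintype.card F - 1) - L ^ (Fintype.card F - 1))).IsHomogeneous k := by
  have := (hℓ.pow (k - (Fintype.card F - 1))).mul
    ((hℓ.pow (Fintype.card F - 1)).sub (hL.pow (Fintype.card F - 1)))
  rwa [one_mul, one_mul, Nat.sub_add_cancel hk] at this

theorem exists_isHomogeneous_eval_eq_pow_on_line (hk : Fintype.card F ≤ k) {w : Fin 2 → F}
    (hw : w ≠ 0) :
    ∃ D : MvPolynomial (Fin 2) F, D.IsHomogeneous k ∧ (∀ a : F, eval (a • w) D = a ^ k) ∧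
      ∀ v ∉ F ∙ w, eval v D = 0 := by
  classical
  obtain ⟨i, hi⟩ : ∃ i, w i ≠ 0 := Function.ne_iff.mp hw
  set ℓ : MvPolynomial (Fin 2) F := C (w i)⁻¹ * X i
  set L : MvPolynomial (Fin 2) F := C (w 1) * X 0 - C (w 0) * X 1
  have hL : ∀ v, eval v L = 0 ↔ v ∈ F ∙ w := fun v => by
    rw [mem_span_singleton_iff_cross_eq_zero hw]
    simp [L]
  have heval : ∀ v, eval v (ℓ ^ (k - (Fintype.card F - 1)) *
      (ℓ ^ (Fintype.card F - 1) - L ^ (Fintype.card F - 1))) =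
      if v ∈ F ∙ w then eval v ℓ ^ k else 0 := fun v => by
    simp only [map_mul, map_sub, map_pow, pow_sub_mul_sub_pow_card_sub_one hk, hL]
  refine ⟨_, isHomogeneous_pow_sub_mul_sub_pow_card_sub_one (isHomogeneous_C_mul_X _ _)
    ((isHomogeneous_C_mul_X _ _).sub (isHomogeneous_C_mul_X _ _)) (by omega), fun a => ?_,
    fun v hv => by rw [heval, if_neg hv]⟩
  rw [heval, if_pos (Submodule.smul_mem _ a (Submodule.mem_span_singleton_self w))]
  simp only [ℓ, map_mul, eval_C, eval_X, Pi.smul_apply, smul_eq_mul]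
  rw [mul_left_comm, inv_mul_cancel₀ hi, mul_one]

theorem card_filter_ne_zero_mem_span_singleton {V : Type*} [AddCommGroup V] [Module F V]
    [Fintype V] [DecidableEq F] [DecidableEq V] [∀ v w : V, Decidable (v ∈ F ∙ w)] {v : V}
    (hv : v ≠ 0) :
    #{w | w ≠ 0 ∧ v ∈ F ∙ w} = Fintype.card F - 1 := by
  have : ({w | w ≠ 0 ∧ v ∈ F ∙ w} : Finset V) = (univ.erase (0 : F)).image (· • v) := by
    ext w
    simp only [mem_filter, mem_univ, true_and, mem_image, mem_erase, and_true,
      Submodule.mem_span_singleton]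
    constructor
    · rintro ⟨hw, a, rfl⟩
      have ha : a ≠ 0 := by rintro rfl; simp at hv
      exact ⟨a⁻¹, inv_ne_zero ha, inv_smul_smul₀ ha w⟩
    · rintro ⟨a, ha, rfl⟩
      exact ⟨smul_ne_zero ha hv, a⁻¹, inv_smul_smul₀ ha v⟩
  rw [this, card_image_of_injective _ (smul_left_injective F hv), card_erase_of_mem (mem_univ _),
    card_univ]

end

/-- For `k > q`, the evaluation map `τ_k` from homogeneous polynomials of degree
`k` to functions `F_q² → F_q` that are homogeneous of degree `k` and vanish at
the origin, is surjective. -/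
theorem eval_surjective_onto_Ik (F : Type*) [Field F] [Fintype F]
    (k : ℕ) (hk : Fintype.card F < k)
    (φ : (Fin 2 → F) → F)
    (hhom : ∀ (lam : F) (v : Fin 2 → F), lam ≠ 0 → φ (lam • v) = lam ^ k * φ v)
    (h0 : φ 0 = 0) :
    ∃ P : MvPolynomial (Fin 2) F, P.IsHomogeneous k ∧ ∀ v, eval v P = φ v := by
  classical
  choose! D hDhom hDline hDoff using
    fun w (hw : w ≠ 0) => exists_isHomogeneous_eval_eq_pow_on_line hk.le hw
  have hφ : ∀ (a : F) w, φ (a • w) = a ^ k * φ w := fun a w => by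
    rcases eq_or_ne a 0 with rfl | ha
    · rw [zero_smul, h0, zero_pow (by omega), zero_mul]
    · exact hhom a w ha
  have hterm : ∀ v w, φ w * eval v (D w) = if w ≠ 0 ∧ v ∈ F ∙ w then φ v else 0 := by
    intro v w
    by_cases hw : w = 0
    · simp [hw, h0]
    by_cases hv : v ∈ F ∙ w
    · obtain ⟨a, rfl⟩ := Submodule.mem_span_singleton.mp hv
      rw [if_pos ⟨hw, hv⟩, hDline w hw, hφ, mul_comm]
    · rw [if_neg (fun h => hv h.2), hDoff w hw v hv, mul_zero]
  have hsummand : ∀ w, (C (φ w) * D w).IsHomogeneous k := fun w => by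
    rcases eq_or_ne w 0 with rfl | hw
    · rw [h0, C_0, zero_mul]
      exact isHomogeneous_zero _ _ _
    · exact (hDhom w hw).C_mul _
  refine ⟨-∑ w, C (φ w) * D w, (IsHomogeneous.sum _ _ _ fun w _ => hsummand w).neg, fun v => ?_⟩
  simp only [map_neg, map_sum, map_mul, eval_C, hterm, ← sum_filter, sum_const, nsmul_eq_mul]
  rcases eq_or_ne v 0 with rfl | hv
  · rw [h0, mul_zero, neg_zero]
  · rw [card_filter_ne_zero_mem_span_singleton hv, Nat.cast_sub Fintype.card_pos,
      FiniteField.cast_card_eq_zero, Nat.cast_one]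
    ring
end
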